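/- arXiv:2502.05306 — 8 statements merged into one kernel-verified Lean document; each statement's English description precedes it below -/
import Mathlib

section
/- In a dagger category, †-Drazin inverses are unique: if g : B ⟶ A and h : B ⟶ A are both †-Drazin inverses of a map f : A ⟶ B, then g = h. -/
/-!
Write `x = f ≫ f†`. For a †-Drazin inverse `g` of `f`, one has `f ≫ g = g† ≫ g ≫ (f ≫ g) ≫ x`,
so `f ≫ g` factors through every power `x ^ n`. Since another †-Drazin inverse `h` satisfies
`x ^ k ≫ f ≫ h = x ^ k`, this gives `(f ≫ g) ≫ (f ≫ h) = f ≫ g`, and symmetrically; as both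
`f ≫ g` and `f ≫ h` are self-adjoint, they coincide. Applying this to `f†`, whose †-Drazin inverses
include `g†` and `h†`, gives `g ≫ f = h ≫ f`, and then `g = g ≫ f ≫ g = h ≫ f ≫ h = h`.
-/

open CategoryTheory

universe v u

/-- A dagger on a category: an identity-on-objects contravariant involution. -/
structure Dagger (C : Type u) [Category.{v} C] where
  dag : ∀ {X Y : C}, (X ⟶ Y) → (Y ⟶ X)
  dag_id : ∀ X : C, dag (𝟙 X) = 𝟙 X
  dag_comp : ∀ {X Y Z : C} (f : X ⟶ Y) (g : Y ⟶ Z), dag (f ≫ g) = dag g ≫ dag f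
  dag_dag : ∀ {X Y : C} (f : X ⟶ Y), dag (dag f) = f

/-- Iterated composition power of an endomorphism, with `cpow x 0 = 𝟙 A`. -/
def cpow {C : Type u} [Category.{v} C] {A : C} (x : A ⟶ A) : ℕ → (A ⟶ A)
  | 0 => 𝟙 A
  | n + 1 => cpow x n ≫ x

/-- `p` is a †-Drazin inverse of `f`. -/
def IsDagDrazinInv {C : Type u} [Category.{v} C] (D : Dagger C)
    {A B : C} (f : A ⟶ B) (p : B ⟶ A) : Prop :=
  (∃ k : ℕ, cpow (f ≫ D.dag f) k ≫ f ≫ p = cpow (f ≫ D.dag f) k ∧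
    p ≫ f ≫ cpow (D.dag f ≫ f) k = cpow (D.dag f ≫ f) k) ∧
  p ≫ f ≫ p = p ∧
  D.dag (f ≫ p) = f ≫ p ∧
  D.dag (p ≫ f) = p ≫ f

variable {C : Type u} [Category.{v} C]

lemma cpow_succ' {A : C} (x : A ⟶ A) (n : ℕ) : cpow x (n + 1) = x ≫ cpow x n := by
  induction n with
  | zero => simp [cpow]
  | succ n ih =>
    show cpow x (n + 1) ≫ x = x ≫ cpow x n ≫ x
    rw [ih, Category.assoc]

namespace Dagger

variable (D : Dagger C)

lemma dag_injective {X Y : C} : Function.Injective (D.dag : (X ⟶ Y) → (Y ⟶ X)) :=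
  fun f g h => by rw [← D.dag_dag f, h, D.dag_dag]

lemma dag_cpow {A : C} (x : A ⟶ A) (n : ℕ) : D.dag (cpow x n) = cpow (D.dag x) n := by
  induction n with
  | zero => exact D.dag_id A
  | succ n ih => rw [cpow, D.dag_comp, ih, cpow_succ']

lemma eq_of_comp_eq_of_comp_eq {A : C} {e e' : A ⟶ A} (he : D.dag e = e) (he' : D.dag e' = e')
    (h : e ≫ e' = e) (h' : e' ≫ e = e') : e = e' := by
  rw [← h, ← he, ← he', ← D.dag_comp, h', he']

end Dagger

namespace IsDagDrazinInv

variable {D : Dagger C} {A B : C} {f : A ⟶ B} {g h : B ⟶ A}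

lemma dag_comp_comp_eq (hg : IsDagDrazinInv D f g) : D.dag g ≫ g ≫ f = D.dag g := by
  obtain ⟨-, hgfg, -, hgf⟩ := hg
  rw [← hgf, ← D.dag_comp, Category.assoc, hgfg]

lemma comp_eq_dag_comp_comp_comp_dag (hg : IsDagDrazinInv D f g) :
    f ≫ g = D.dag g ≫ g ≫ f ≫ D.dag f :=
  calc f ≫ g = D.dag g ≫ D.dag f := by rw [← D.dag_comp, hg.2.2.1]
    _ = (D.dag g ≫ g ≫ f) ≫ D.dag f := by rw [hg.dag_comp_comp_eq]
    _ = D.dag g ≫ g ≫ f ≫ D.dag f := by simp only [Category.assoc]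

lemma exists_comp_eq_comp_cpow (hg : IsDagDrazinInv D f g) (n : ℕ) :
    ∃ y : A ⟶ A, f ≫ g = y ≫ cpow (f ≫ D.dag f) n := by
  induction n with
  | zero => exact ⟨f ≫ g, (Category.comp_id _).symm⟩
  | succ n ih =>
    obtain ⟨y, hy⟩ := ih
    refine ⟨D.dag g ≫ g ≫ y, ?_⟩
    calc f ≫ g = D.dag g ≫ g ≫ (f ≫ g) ≫ f ≫ D.dag f := by
          rw [← Category.assoc g (f ≫ g), hg.2.1]; exact hg.comp_eq_dag_comp_comp_comp_dag
      _ = (D.dag g ≫ g ≫ y) ≫ cpow (f ≫ D.dag f) (n + 1) := by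
          rw [hy, cpow]; simp only [Category.assoc]

lemma comp_comp_comp_eq (hg : IsDagDrazinInv D f g) (hh : IsDagDrazinInv D f h) :
    (f ≫ g) ≫ f ≫ h = f ≫ g := by
  obtain ⟨⟨k, hk, -⟩, -⟩ := hh
  obtain ⟨y, hy⟩ := hg.exists_comp_eq_comp_cpow k
  rw [hy, Category.assoc, hk]

lemma comp_eq_comp (hg : IsDagDrazinInv D f g) (hh : IsDagDrazinInv D f h) : f ≫ g = f ≫ h :=
  D.eq_of_comp_eq_of_comp_eq hg.2.2.1 hh.2.2.1 (hg.comp_comp_comp_eq hh) (hh.comp_comp_comp_eq hg)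

lemma dag (hg : IsDagDrazinInv D f g) : IsDagDrazinInv D (D.dag f) (D.dag g) := by
  obtain ⟨⟨k, hk₁, hk₂⟩, hgfg, hfg, hgf⟩ := hg
  have hdfg : D.dag f ≫ D.dag g = g ≫ f := (D.dag_comp g f).symm.trans hgf
  have hdgf : D.dag g ≫ D.dag f = f ≫ g := (D.dag_comp f g).symm.trans hfg
  refine ⟨⟨k, ?_, ?_⟩, ?_, by rw [hdfg, hgf], by rw [hdgf, hfg]⟩
  · simpa only [D.dag_comp, D.dag_cpow, D.dag_dag, Category.assoc] using congrArg D.dag hk₂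
  · simpa only [D.dag_comp, D.dag_cpow, D.dag_dag, Category.assoc] using congrArg D.dag hk₁
  · simpa only [D.dag_comp, Category.assoc] using congrArg D.dag hgfg

end IsDagDrazinInv

/-- †-Drazin inverses are unique. -/
theorem dagDrazinInv_unique {C : Type u} [Category.{v} C] (D : Dagger C)
    {A B : C} (f : A ⟶ B) (g h : B ⟶ A)
    (hg : IsDagDrazinInv D f g) (hh : IsDagDrazinInv D f h) : g = h := by
  have hfg : f ≫ g = f ≫ h := hg.comp_eq_comp hh
  have hgf : g ≫ f = h ≫ f := D.dag_injective <| by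
    simpa only [D.dag_comp] using hg.dag.comp_eq_comp hh.dag
  calc g = g ≫ f ≫ g := hg.2.1.symm
    _ = h ≫ f ≫ h := by rw [hfg, ← Category.assoc, hgf, Category.assoc]
    _ = h := hh.2.1
end

section
/- In a dagger category, let f : A ⟶ B and p : B ⟶ A satisfy (f ≫ p)† = f ≫ p and (p ≫ f)† = p ≫ f. Then the following four conditions are equivalent: (a) there exists j ∈ ℕ with f ≫ p ≫ (f ≫ f†)^j = (f ≫ f†)^j; (b) there exists k ∈ ℕ with (f ≫ f†)^k ≫ f ≫ p = (f ≫ f†)^k; (c) there exists m ∈ ℕ with p ≫ f ≫ (f† ≫ f)^m = (f† ≫ f)^m; (d) there exists n ∈ ℕ with (f† ≫ f)^n ≫ p ≫ f = (f† ≫ f)^n. -/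
open CategoryTheory

universe v u

/-! Applying `†` to `e ≫ x = x` with `e = f ≫ p` and `x = (f ≫ f†)^j` self-adjoint gives
`x ≫ e = x`, so (a) ↔ (b) and likewise (c) ↔ (d). The powers of `f ≫ f†` and `f† ≫ f` are
linked by `(f† ≫ f)^(k+1) = f† ≫ (f ≫ f†)^k ≫ f`, which turns (b) into (d) and (c) into (a)
at the cost of raising the exponent by one. -/

section

variable {C : Type u} [Category.{v} C]

lemma comp_cpow_comm {A : C} (x : A ⟶ A) (n : ℕ) : x ≫ cpow x n = cpow x n ≫ x := by
  induction n with
  | zero => simp [cpow]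
  | succ n ih => rw [cpow, ← Category.assoc, ← ih, Category.assoc]

lemma cpow_comp_succ {A B : C} (u : A ⟶ B) (v : B ⟶ A) (k : ℕ) :
    cpow (v ≫ u) (k + 1) = v ≫ cpow (u ≫ v) k ≫ u := by
  induction k with
  | zero => simp [cpow]
  | succ k ih => rw [cpow, ih]; simp only [cpow, Category.assoc]

lemma cpow_comp_eq_self_of_cpow_comp_eq_self {A B : C} (u : A ⟶ B) (v : B ⟶ A) (p : B ⟶ A)
    {k : ℕ} (hk : cpow (u ≫ v) k ≫ u ≫ p = cpow (u ≫ v) k) :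
    cpow (v ≫ u) (k + 1) ≫ p ≫ u = cpow (v ≫ u) (k + 1) := by
  rw [cpow_comp_succ]
  simp only [Category.assoc]
  rw [reassoc_of% hk]

lemma comp_cpow_eq_self_of_comp_cpow_eq_self {A B : C} (u : A ⟶ B) (v : B ⟶ A) (p : B ⟶ A)
    {m : ℕ} (hm : p ≫ u ≫ cpow (v ≫ u) m = cpow (v ≫ u) m) :
    u ≫ p ≫ cpow (u ≫ v) (m + 1) = cpow (u ≫ v) (m + 1) := by
  rw [cpow_comp_succ, reassoc_of% hm]

namespace Dagger

variable (D : Dagger C)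

lemma dag_cpow_comp_dag {A B : C} (f : A ⟶ B) (n : ℕ) :
    D.dag (cpow (f ≫ D.dag f) n) = cpow (f ≫ D.dag f) n := by
  rw [dag_cpow, D.dag_comp, D.dag_dag]

lemma dag_cpow_dag_comp {A B : C} (f : A ⟶ B) (n : ℕ) :
    D.dag (cpow (D.dag f ≫ f) n) = cpow (D.dag f ≫ f) n := by
  rw [dag_cpow, D.dag_comp, D.dag_dag]

lemma comp_eq_self_iff_comp_eq_self {A : C} {e x : A ⟶ A} (he : D.dag e = e)
    (hx : D.dag x = x) : e ≫ x = x ↔ x ≫ e = x := by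
  constructor <;> intro h <;> simpa only [D.dag_comp, he, hx] using congrArg D.dag h

end Dagger

end

/-- The four variants of axiom [D†.1] are equivalent in the presence of [D†.3] and [D†.4]. -/
theorem dagDrazin_D1_tfae {C : Type u} [Category.{v} C] (D : Dagger C)
    {A B : C} (f : A ⟶ B) (p : B ⟶ A)
    (h3 : D.dag (f ≫ p) = f ≫ p) (h4 : D.dag (p ≫ f) = p ≫ f) :
    List.TFAE
      [∃ j : ℕ, f ≫ p ≫ cpow (f ≫ D.dag f) j = cpow (f ≫ D.dag f) j,
       ∃ k : ℕ, cpow (f ≫ D.dag f) k ≫ f ≫ p = cpow (f ≫ D.dag f) k,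
       ∃ m : ℕ, p ≫ f ≫ cpow (D.dag f ≫ f) m = cpow (D.dag f ≫ f) m,
       ∃ n : ℕ, cpow (D.dag f ≫ f) n ≫ p ≫ f = cpow (D.dag f ≫ f) n] := by
  tfae_have 1 ↔ 2 := by
    simp only [← Category.assoc, D.comp_eq_self_iff_comp_eq_self h3 (D.dag_cpow_comp_dag f _)]
  tfae_have 3 ↔ 4 := by
    simp only [← Category.assoc, D.comp_eq_self_iff_comp_eq_self h4 (D.dag_cpow_dag_comp f _)]
  tfae_have 2 → 4 := fun ⟨k, hk⟩ =>
    ⟨k + 1, cpow_comp_eq_self_of_cpow_comp_eq_self f (D.dag f) p hk⟩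
  tfae_have 3 → 1 := fun ⟨m, hm⟩ =>
    ⟨m + 1, comp_cpow_eq_self_of_comp_cpow_eq_self f (D.dag f) p hm⟩
  tfae_finish
end

section
/- In a dagger category, every partial isometry is †-Drazin with its adjoint as †-Drazin inverse: if f : A ⟶ B satisfies f ≫ f† ≫ f = f, then f† is a †-Drazin inverse of f, and moreover axiom [D†.1] holds with k = 1, i.e. (f ≫ f†) ≫ f ≫ f† = f ≫ f† and f† ≫ f ≫ (f† ≫ f) = f† ≫ f. -/
open CategoryTheory

universe v u

theorem cpow_one {C : Type u} [Category.{v} C] {A : C} (x : A ⟶ A) : cpow x 1 = x :=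
  Category.id_comp x

namespace Dagger

variable {C : Type u} [Category.{v} C] (D : Dagger C) {A B : C}

theorem dag_self_comp_dag (f : A ⟶ B) : D.dag (f ≫ D.dag f) = f ≫ D.dag f := by
  rw [D.dag_comp, D.dag_dag]

theorem dag_dag_comp_self (f : A ⟶ B) : D.dag (D.dag f ≫ f) = D.dag f ≫ f := by
  rw [D.dag_comp, D.dag_dag]

def IsPartialIsometry (f : A ⟶ B) : Prop :=
  f ≫ D.dag f ≫ f = f

namespace IsPartialIsometry

variable {D} {f : A ⟶ B}

theorem dag (hf : D.IsPartialIsometry f) : D.IsPartialIsometry (D.dag f) := by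
  have h := congrArg D.dag hf
  rw [D.dag_comp, D.dag_comp, D.dag_dag, Category.assoc] at h
  rwa [IsPartialIsometry, D.dag_dag]

theorem self_comp_dag_idem (hf : D.IsPartialIsometry f) :
    (f ≫ D.dag f) ≫ f ≫ D.dag f = f ≫ D.dag f := by
  rw [Category.assoc, reassoc_of% hf]

theorem dag_comp_self_idem (hf : D.IsPartialIsometry f) :
    D.dag f ≫ f ≫ (D.dag f ≫ f) = D.dag f ≫ f := by
  rw [hf]

end IsPartialIsometry

end Dagger

/-- Every partial isometry is †-Drazin with its adjoint as †-Drazin inverse, with index ≤ 1. -/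
theorem partialIsometry_dagDrazin {C : Type u} [Category.{v} C] (D : Dagger C)
    {A B : C} (f : A ⟶ B) (hf : f ≫ D.dag f ≫ f = f) :
    IsDagDrazinInv D f (D.dag f) ∧
    (f ≫ D.dag f) ≫ f ≫ D.dag f = f ≫ D.dag f ∧
    D.dag f ≫ f ≫ (D.dag f ≫ f) = D.dag f ≫ f := by
  have hf : D.IsPartialIsometry f := hf
  have hrange := hf.self_comp_dag_idem
  have hsupport := hf.dag_comp_self_idem
  have hdag := hf.dag
  rw [Dagger.IsPartialIsometry, D.dag_dag] at hdag
  refine ⟨⟨⟨1, ?_, ?_⟩, hdag, D.dag_self_comp_dag f, D.dag_dag_comp_self f⟩, hrange, hsupport⟩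
  · rwa [cpow_one]
  · rwa [cpow_one]
end

section
/- In a dagger category, if f∂ : B ⟶ A is a †-Drazin inverse of f : A ⟶ B, then f∂ is itself †-Drazin: the map f ≫ f∂ ≫ f : A ⟶ B is a †-Drazin inverse of f∂, and axiom [D†.1] for this pair holds with k = 1. -/
open CategoryTheory

universe v u

/-!
The axioms [D†.2]–[D†.4] make `f ≫ p ≫ f` a Moore–Penrose inverse of `p`. A Moore–Penrose
inverse `g` of any `f` is a †-Drazin inverse with `k = 1`, since
`(f ≫ f†) ≫ f ≫ g = f ≫ f† ≫ (f ≫ g)† = f ≫ (f ≫ g ≫ f)† = f ≫ f†`, and dually.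
-/

namespace Dagger

variable {C : Type u} [Category.{v} C] (D : Dagger C)

structure IsMoorePenroseInv {A B : C} (f : A ⟶ B) (g : B ⟶ A) : Prop where
  comp_inv_comp : f ≫ g ≫ f = f
  inv_comp_inv : g ≫ f ≫ g = g
  dag_comp_inv : D.dag (f ≫ g) = f ≫ g
  dag_inv_comp : D.dag (g ≫ f) = g ≫ f

variable {D}

theorem isMoorePenroseInv_comp_comp {A B : C} {f : A ⟶ B} {p : B ⟶ A}
    (hp : p ≫ f ≫ p = p) (hfp : D.dag (f ≫ p) = f ≫ p) (hpf : D.dag (p ≫ f) = p ≫ f) :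
    D.IsMoorePenroseInv p (f ≫ p ≫ f) where
  comp_inv_comp := by simp only [Category.assoc, hp]
  inv_comp_inv := by simp only [Category.assoc, reassoc_of% hp]
  dag_comp_inv := by simp only [reassoc_of% hp, hpf]
  dag_inv_comp := by simp only [Category.assoc, hp, hfp]

namespace IsMoorePenroseInv

variable {A B : C} {f : A ⟶ B} {g : B ⟶ A}

theorem comp_dag_comp_comp_inv (h : D.IsMoorePenroseInv f g) :
    (f ≫ D.dag f) ≫ f ≫ g = f ≫ D.dag f :=
  calc (f ≫ D.dag f) ≫ f ≫ g = f ≫ D.dag f ≫ D.dag (f ≫ g) := by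
        rw [h.dag_comp_inv, Category.assoc]
    _ = f ≫ D.dag ((f ≫ g) ≫ f) := by rw [D.dag_comp (f ≫ g) f]
    _ = f ≫ D.dag f := by rw [Category.assoc, h.comp_inv_comp]

theorem inv_comp_comp_dag_comp (h : D.IsMoorePenroseInv f g) :
    g ≫ f ≫ D.dag f ≫ f = D.dag f ≫ f :=
  calc g ≫ f ≫ D.dag f ≫ f = D.dag (g ≫ f) ≫ D.dag f ≫ f := by
        rw [h.dag_inv_comp, Category.assoc]
    _ = D.dag (f ≫ g ≫ f) ≫ f := by rw [← Category.assoc, ← D.dag_comp]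
    _ = D.dag f ≫ f := by rw [h.comp_inv_comp]

theorem isDagDrazinInv (h : D.IsMoorePenroseInv f g) : IsDagDrazinInv D f g :=
  ⟨⟨1, by simpa only [cpow, Category.id_comp] using h.comp_dag_comp_comp_inv,
      by simpa only [cpow, Category.id_comp] using h.inv_comp_comp_dag_comp⟩,
    h.inv_comp_inv, h.dag_comp_inv, h.dag_inv_comp⟩

end IsMoorePenroseInv

end Dagger

/-- If `p` is a †-Drazin inverse of `f`, then `f ≫ p ≫ f` is a †-Drazin inverse of `p`,
with axiom [D†.1] holding for `k = 1`. -/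
theorem dagDrazinInv_dagDrazin {C : Type u} [Category.{v} C] (D : Dagger C)
    {A B : C} (f : A ⟶ B) (p : B ⟶ A) (h : IsDagDrazinInv D f p) :
    IsDagDrazinInv D p (f ≫ p ≫ f) ∧
    (p ≫ D.dag p) ≫ p ≫ (f ≫ p ≫ f) = p ≫ D.dag p ∧
    (f ≫ p ≫ f) ≫ p ≫ (D.dag p ≫ p) = D.dag p ≫ p := by
  obtain ⟨-, hp, hfp, hpf⟩ := h
  have hmp := Dagger.isMoorePenroseInv_comp_comp hp hfp hpf
  exact ⟨hmp.isDagDrazinInv, hmp.comp_dag_comp_comp_inv, hmp.inv_comp_comp_dag_comp⟩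
end

section
/- In a dagger category, a map p : B ⟶ A is a †-group inverse of f : A ⟶ B if and only if p is a †-Drazin inverse of f for which axiom [D†.1] holds with k = 1. Moreover, in this case the equalities f ≫ p ≫ f ≫ f† = f ≫ f† and f† ≫ f ≫ p ≫ f = f† ≫ f also hold. -/
open CategoryTheory

universe v u

/-- `p` is a †-group inverse of `f`. -/
def IsDagGroupInv {C : Type u} [Category.{v} C] (D : Dagger C)
    {A B : C} (f : A ⟶ B) (p : B ⟶ A) : Prop :=
  f ≫ D.dag f ≫ f ≫ p = f ≫ D.dag f ∧
  p ≫ f ≫ D.dag f ≫ f = D.dag f ≫ f ∧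
  p ≫ f ≫ p = p ∧
  D.dag (f ≫ p) = f ≫ p ∧
  D.dag (p ≫ f) = p ≫ f

section Category

variable {C : Type u} [Category.{v} C] {A B : C}

@[simp]
theorem cpow_one_s8 (x : A ⟶ A) : cpow x 1 = x :=
  Category.id_comp x

theorem comp_comp_comp_left_eq {f : A ⟶ B} {g p : B ⟶ A}
    (ha : f ≫ g ≫ f ≫ p = f ≫ g) (hb : p ≫ f ≫ g ≫ f = g ≫ f) :
    f ≫ p ≫ f ≫ g = f ≫ g :=
  calc f ≫ p ≫ f ≫ g = f ≫ p ≫ f ≫ g ≫ f ≫ p := by rw [ha]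
    _ = f ≫ (p ≫ f ≫ g ≫ f) ≫ p := by simp only [Category.assoc]
    _ = f ≫ g ≫ f ≫ p := by rw [hb, Category.assoc]
    _ = f ≫ g := ha

theorem comp_comp_comp_right_eq {f : A ⟶ B} {g p : B ⟶ A}
    (ha : f ≫ g ≫ f ≫ p = f ≫ g) (hb : p ≫ f ≫ g ≫ f = g ≫ f) :
    g ≫ f ≫ p ≫ f = g ≫ f :=
  calc g ≫ f ≫ p ≫ f = p ≫ f ≫ g ≫ f ≫ p ≫ f := by rw [reassoc_of% hb]
    _ = p ≫ (f ≫ g ≫ f ≫ p) ≫ f := by simp only [Category.assoc]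
    _ = p ≫ f ≫ g ≫ f := by rw [ha, Category.assoc]
    _ = g ≫ f := hb

end Category

namespace IsDagGroupInv

variable {C : Type u} [Category.{v} C] {D : Dagger C} {A B : C} {f : A ⟶ B} {p : B ⟶ A}

theorem isDagDrazinInv (h : IsDagGroupInv D f p) : IsDagDrazinInv D f p :=
  ⟨⟨1, by simpa using h.1, by simpa using h.2.1⟩, h.2.2⟩

theorem comp_comp_comp_dag (h : IsDagGroupInv D f p) :
    f ≫ p ≫ f ≫ D.dag f = f ≫ D.dag f :=
  comp_comp_comp_left_eq h.1 h.2.1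

theorem dag_comp_comp_comp (h : IsDagGroupInv D f p) :
    D.dag f ≫ f ≫ p ≫ f = D.dag f ≫ f :=
  comp_comp_comp_right_eq h.1 h.2.1

end IsDagGroupInv

/-- `p` is a †-group inverse of `f` iff `p` is a †-Drazin inverse of `f` for which
axiom [D†.1] holds with `k = 1`; moreover, in this case two further equalities hold. -/
theorem dagGroupInv_iff {C : Type u} [Category.{v} C] (D : Dagger C)
    {A B : C} (f : A ⟶ B) (p : B ⟶ A) :
    (IsDagGroupInv D f p ↔
      (IsDagDrazinInv D f p ∧
        (f ≫ D.dag f) ≫ f ≫ p = f ≫ D.dag f ∧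
        p ≫ f ≫ (D.dag f ≫ f) = D.dag f ≫ f)) ∧
    (IsDagGroupInv D f p →
      f ≫ p ≫ f ≫ D.dag f = f ≫ D.dag f ∧
      D.dag f ≫ f ≫ p ≫ f = D.dag f ≫ f) := by
  refine ⟨⟨fun h => ⟨h.isDagDrazinInv, by simpa using h.1, h.2.1⟩, ?_⟩,
    fun h => ⟨h.comp_comp_comp_dag, h.dag_comp_comp_comp⟩⟩
  rintro ⟨⟨-, hD⟩, h1a, h1b⟩
  exact ⟨by simpa using h1a, h1b, hD⟩
end

section
/- In a dagger category, let x : A ⟶ A be self-adjoint, i.e. x† = x. Then a map d : A ⟶ A is a †-Drazin inverse of x if and only if d is a Drazin inverse of x. In particular, a self-adjoint map is †-Drazin if and only if it is Drazin, and in that case its Drazin inverse and †-Drazin inverse coincide and are self-adjoint. -/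
/-!
Written multiplicatively in `End A`, a dagger is an involutive anti-automorphism, so the argument
takes place in a monoid with involution. A Drazin inverse is unique and commutes with everything
that commutes with its element. Applying `star` to a Drazin inverse of a self-adjoint `a` gives
another one, so it is self-adjoint, and the †-Drazin identities follow with the index doubled.
Conversely, if `b` is a †-Drazin inverse of a self-adjoint `a`, then `b * star b` is a Drazin
inverse of `a ^ 2`, hence commutes with `a`; since `b = b * star b * a`, also `a` and `b` commute.
-/

open CategoryTheory

universe v u

/-- `d` is a Drazin inverse of the endomorphism `x`. -/
def IsDrazinInv {C : Type u} [Category.{v} C] {A : C} (x d : A ⟶ A) : Prop :=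
  (∃ k : ℕ, cpow x (k + 1) ≫ d = cpow x k) ∧
  d ≫ x ≫ d = d ∧
  x ≫ d = d ≫ x

section Monoid

variable {M : Type*} [Monoid M]

/-- Written in applicative order, as in `End A` where `f * g = g ≫ f`; so is `IsDagDrazinInverse`,
so that `IsDrazinInv` and `IsDagDrazinInv` translate verbatim. -/
def IsDrazinInverse (a b : M) : Prop :=
  (∃ k : ℕ, b * a ^ (k + 1) = a ^ k) ∧ b * a * b = b ∧ Commute b a

variable {a b c : M}

lemma mul_pow_succ_eq_pow_of_le {k n : ℕ} (h : b * a ^ (k + 1) = a ^ k) (hkn : k ≤ n) :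
    b * a ^ (n + 1) = a ^ n := by
  obtain ⟨j, rfl⟩ := Nat.exists_eq_add_of_le hkn
  rw [add_right_comm, pow_add, ← mul_assoc, h, pow_add]

namespace IsDrazinInverse

lemma pow_succ_mul_pow (h : IsDrazinInverse a b) (j : ℕ) : b ^ (j + 1) * a ^ j = b := by
  obtain ⟨-, hb, hc⟩ := h
  induction j with
  | zero => simp
  | succ j ih =>
    calc b ^ (j + 2) * a ^ (j + 1) = b ^ (j + 1) * a ^ j * (b * a) := by
          rw [pow_succ b (j + 1), pow_succ a j, mul_assoc, ← mul_assoc b, (hc.pow_right j).eq]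
          simp only [mul_assoc]
      _ = b := by rw [ih, hc.eq, ← mul_assoc, hb]

lemma pow_mul_pow_succ (h : IsDrazinInverse a b) (j : ℕ) : a ^ j * b ^ (j + 1) = b := by
  rw [← (h.2.2.pow_pow (j + 1) j).eq, h.pow_succ_mul_pow]

lemma pow_succ_mul_pow_succ (h : IsDrazinInverse a b) (j : ℕ) :
    b ^ (j + 1) * a ^ (j + 1) = b * a := by
  rw [pow_succ a, ← mul_assoc, h.pow_succ_mul_pow]

theorem unique (hb : IsDrazinInverse a b) (hc : IsDrazinInverse a c) : b = c := by
  obtain ⟨k, hbk⟩ := hb.1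
  obtain ⟨l, hcl⟩ := hc.1
  have hbK := mul_pow_succ_eq_pow_of_le hbk (le_max_left k l)
  have hcK := mul_pow_succ_eq_pow_of_le hcl (le_max_right k l)
  set K := max k l
  calc b = b ^ (K + 1) * a ^ K := (hb.pow_succ_mul_pow K).symm
    _ = b * a * c := by
      rw [← hcK, (hc.2.2.pow_right _).eq, ← mul_assoc, hb.pow_succ_mul_pow_succ]
    _ = b * a * (a ^ K * c ^ (K + 1)) := by rw [hc.pow_mul_pow_succ]
    _ = c := by
      rw [mul_assoc, ← mul_assoc a, ← pow_succ', ← mul_assoc, hbK, hc.pow_mul_pow_succ]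

theorem commute_of_commute (h : IsDrazinInverse a b) (hca : Commute c a) : Commute c b := by
  obtain ⟨k, hk⟩ := h.1
  have key : b ^ (k + 1) * a ^ (2 * k + 1) = a ^ k := by
    rw [two_mul, add_right_comm, pow_add a, ← mul_assoc, h.pow_succ_mul_pow_succ, mul_assoc,
      ← pow_succ', hk]
  have key' : a ^ (2 * k + 1) * b ^ (k + 1) = a ^ k := by
    rw [← (h.2.2.pow_pow _ _).eq, key]
  calc c * b = c * (a ^ k * b ^ (k + 1)) := by rw [h.pow_mul_pow_succ]
    _ = a ^ k * c * b ^ (k + 1) := by rw [← mul_assoc, (hca.pow_right k).eq]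
    _ = b ^ (k + 1) * a ^ (2 * k + 1) * c * b ^ (k + 1) := by rw [key]
    _ = b ^ (k + 1) * c * a ^ (2 * k + 1) * b ^ (k + 1) := by
      rw [mul_assoc (b ^ (k + 1)), ← (hca.pow_right _).eq, ← mul_assoc]
    _ = b ^ (k + 1) * c * a ^ k := by rw [mul_assoc _ (a ^ _), key']
    _ = b ^ (k + 1) * a ^ k * c := by rw [mul_assoc, (hca.pow_right k).eq, ← mul_assoc]
    _ = b * c := by rw [h.pow_succ_mul_pow]

end IsDrazinInverse

end Monoid

section StarMul

variable {M : Type*} [Monoid M] [StarMul M] {a b : M}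

def IsDagDrazinInverse (a b : M) : Prop :=
  (∃ k : ℕ, b * a * (star a * a) ^ k = (star a * a) ^ k ∧
    (a * star a) ^ k * a * b = (a * star a) ^ k) ∧
  b * a * b = b ∧ IsSelfAdjoint (b * a) ∧ IsSelfAdjoint (a * b)

namespace IsDrazinInverse

lemma star (h : IsDrazinInverse a b) : IsDrazinInverse (star a) (star b) := by
  obtain ⟨⟨k, hk⟩, hb, hc⟩ := h
  refine ⟨⟨k, ?_⟩, ?_, hc.star_star⟩
  · rw [← star_pow, ← star_mul, ← (hc.pow_right _).eq, hk, star_pow]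
  · simpa only [star_mul, mul_assoc] using congrArg Star.star hb

lemma isSelfAdjoint (ha : IsSelfAdjoint a) (h : IsDrazinInverse a b) : IsSelfAdjoint b :=
  (h.unique (ha.star_eq ▸ h.star)).symm

lemma isDagDrazinInverse (ha : IsSelfAdjoint a) (h : IsDrazinInverse a b) :
    IsDagDrazinInverse a b := by
  have hsb := h.isSelfAdjoint ha
  obtain ⟨⟨k, hk⟩, hb, hc⟩ := h
  have hk' : b * a ^ (2 * k + 1) = a ^ (2 * k) := mul_pow_succ_eq_pow_of_le hk (by omega)
  have hsa : IsSelfAdjoint (b * a) := by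
    rw [IsSelfAdjoint, star_mul, ha.star_eq, hsb.star_eq, hc.eq]
  simp only [IsDagDrazinInverse, ha.star_eq, ← sq, ← pow_mul]
  refine ⟨⟨k, ?_, ?_⟩, hb, hsa, hc.eq ▸ hsa⟩
  · rw [mul_assoc, ← pow_succ', hk']
  · rw [← pow_succ, ← (hc.pow_right _).eq, hk']

end IsDrazinInverse

namespace IsDagDrazinInverse

lemma exists_pow_of_isSelfAdjoint (ha : IsSelfAdjoint a) (h : IsDagDrazinInverse a b) :
    ∃ m : ℕ, b * a ^ (m + 1) = a ^ m ∧ a ^ (m + 1) * b = a ^ m := by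
  obtain ⟨k, hk₁, hk₂⟩ := h.1
  rw [ha.star_eq, ← sq, ← pow_mul] at hk₁ hk₂
  exact ⟨2 * k, by rwa [pow_succ', ← mul_assoc], by rwa [pow_succ]⟩

lemma isDrazinInverse_sq_mul_star (ha : IsSelfAdjoint a) (h : IsDagDrazinInverse a b) :
    IsDrazinInverse (a ^ 2) (b * star b) := by
  obtain ⟨m, hm₁, hm₂⟩ := h.exists_pow_of_isSelfAdjoint ha
  obtain ⟨-, hb, hba, hab⟩ := h
  rw [IsSelfAdjoint, star_mul, ha.star_eq] at hba hab
  have hcomm : Commute b (a ^ 2) := by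
    rw [Commute, SemiconjBy, sq, ← mul_assoc, ← hba, mul_assoc, hab, mul_assoc]
  have hcomm' : Commute (star b) (a ^ 2) := (ha.pow 2).star_eq ▸ hcomm.star_star
  refine ⟨⟨m, ?_⟩, ?_, hcomm.mul_left hcomm'⟩
  · have hsm : star b * a ^ (m + 1) = a ^ m := by
      rw [← (ha.pow _).star_eq, ← star_mul, hm₂, (ha.pow m).star_eq]
    rw [← pow_mul, ← pow_mul, show 2 * (m + 1) = (m + 1) + (m + 1) by ring, pow_add,
      mul_assoc b, ← mul_assoc (star b), hsm, pow_mul_comm, ← mul_assoc, hm₁, ← pow_add, two_mul]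
  · calc b * star b * a ^ 2 * (b * star b) = b * (star b * a) * a * b * star b := by
          rw [sq]; simp only [mul_assoc]
      _ = b * star b := by rw [hab, ← mul_assoc, hb, hb]

lemma isDrazinInverse (ha : IsSelfAdjoint a) (h : IsDagDrazinInverse a b) :
    IsDrazinInverse a b := by
  obtain ⟨m, hm, -⟩ := h.exists_pow_of_isSelfAdjoint ha
  have hq := h.isDrazinInverse_sq_mul_star ha
  obtain ⟨-, hb, -, hab⟩ := h
  rw [IsSelfAdjoint, star_mul, ha.star_eq] at hab
  have hqa : b * star b * a = b := by rw [mul_assoc, hab, ← mul_assoc, hb]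
  have haq : Commute a (b * star b) := hq.commute_of_commute (Commute.self_pow a 2)
  refine ⟨⟨m, hm⟩, hb, ?_⟩
  calc b * a = b * star b * a * a := by rw [hqa]
    _ = a * (b * star b) * a := by rw [haq.eq]
    _ = a * b := by rw [mul_assoc, hqa]

end IsDagDrazinInverse

theorem IsSelfAdjoint.isDagDrazinInverse_iff (ha : IsSelfAdjoint a) :
    IsDagDrazinInverse a b ↔ IsDrazinInverse a b :=
  ⟨(·.isDrazinInverse ha), (·.isDagDrazinInverse ha)⟩

end StarMul

section Category

variable {C : Type u} [Category.{v} C]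

abbrev Dagger.starMulEnd (D : Dagger C) (A : C) : StarMul (End A) where
  star := D.dag
  star_involutive := D.dag_dag
  star_mul f g := D.dag_comp g f

lemma cpow_eq_pow {A : C} (x : A ⟶ A) (n : ℕ) : cpow x n = End.of x ^ n := by
  induction n with
  | zero => rfl
  | succ n ih => rw [pow_succ', ← ih]; rfl

lemma isDrazinInv_iff_isDrazinInverse {A : C} (x d : A ⟶ A) :
    IsDrazinInv x d ↔ IsDrazinInverse (End.of x) d := by
  simp only [IsDrazinInv, cpow_eq_pow]
  exact Iff.rfl

lemma isDagDrazinInv_iff_isDagDrazinInverse (D : Dagger C) {A : C} (f p : A ⟶ A) :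
    letI := D.starMulEnd A
    IsDagDrazinInv D f p ↔ IsDagDrazinInverse (End.of f) p := by
  simp only [IsDagDrazinInv, cpow_eq_pow]
  exact Iff.rfl

end Category

/-- For a self-adjoint map, †-Drazin inverses and Drazin inverses coincide, and
any such inverse is self-adjoint. -/
theorem selfAdjoint_dagDrazin_iff_drazin {C : Type u} [Category.{v} C] (D : Dagger C)
    {A : C} (x : A ⟶ A) (hx : D.dag x = x) :
    (∀ d : A ⟶ A, IsDagDrazinInv D x d ↔ IsDrazinInv x d) ∧
    ((∃ d, IsDagDrazinInv D x d) ↔ (∃ d, IsDrazinInv x d)) ∧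
    (∀ d : A ⟶ A, IsDrazinInv x d → D.dag d = d) := by
  let _ := D.starMulEnd A
  have ha : IsSelfAdjoint (End.of x) := hx
  have hiff (d : A ⟶ A) : IsDagDrazinInv D x d ↔ IsDrazinInv x d := by
    rw [isDagDrazinInv_iff_isDagDrazinInverse, isDrazinInv_iff_isDrazinInverse]
    exact ha.isDagDrazinInverse_iff
  exact ⟨hiff, exists_congr hiff,
    fun d hd => ((isDrazinInv_iff_isDrazinInverse x d).1 hd).isSelfAdjoint ha⟩
end

section
/- In a dagger category, a map f : A ⟶ B has a †-group inverse if and only if both endomorphisms f ≫ f† : A ⟶ A and f† ≫ f : B ⟶ B have group inverses. -/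
open CategoryTheory

universe v u

/-- `g` is a group inverse of the endomorphism `x`. -/
def IsGroupInv {C : Type u} [Category.{v} C] {A : C} (x g : A ⟶ A) : Prop :=
  x ≫ g ≫ x = x ∧ g ≫ x ≫ g = g ∧ x ≫ g = g ≫ x

/-
The forward direction: if `p` is a †-group inverse of `f`, then `p† ≫ p` is a group inverse of
`f ≫ f†`, and applying this to the †-group inverse `p†` of `f†` gives `p ≫ p†` for `f† ≫ f`.
Conversely, a group inverse `g` of the self-adjoint `f ≫ f†` is itself self-adjoint by uniqueness,
and `f† ≫ g` is a †-group inverse of `f`; the group inverse `h` of `f† ≫ f` enters through the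
intertwining `(f ≫ f†) ≫ f = f ≫ (f† ≫ f)`, which gives `(f ≫ f†) ≫ g ≫ f = f ≫ (f† ≫ f) ≫ h`.
-/

variable {C : Type u} [Category.{v} C]

namespace Dagger

variable (D : Dagger C)

theorem dag_comp_dag {A B : C} (f : A ⟶ B) : D.dag (f ≫ D.dag f) = f ≫ D.dag f := by
  rw [D.dag_comp, D.dag_dag]

end Dagger

namespace IsGroupInv

variable {A : C} {x g g' : A ⟶ A}

theorem self_self_inv (hg : IsGroupInv x g) : x ≫ x ≫ g = x := by
  rw [hg.2.2, hg.1]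

theorem inv_self_self (hg : IsGroupInv x g) : g ≫ x ≫ x = x := by
  rw [← Category.assoc, ← hg.2.2, Category.assoc, hg.1]

theorem unique (hg : IsGroupInv x g) (hg' : IsGroupInv x g') : g = g' := by
  have hxg : x ≫ g = x ≫ g' :=
    calc x ≫ g = x ≫ g' ≫ x ≫ g := by rw [reassoc_of% hg'.1]
      _ = g' ≫ x ≫ x ≫ g := by rw [reassoc_of% hg'.2.2]
      _ = x ≫ g' := by rw [hg.self_self_inv, hg'.2.2]
  calc g = g ≫ x ≫ g := hg.2.1.symm
    _ = x ≫ g ≫ g' := by rw [hxg, ← reassoc_of% hg.2.2]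
    _ = g' := by rw [reassoc_of% hxg, reassoc_of% hg'.2.2, hg'.2.1]

theorem dag (D : Dagger C) (hg : IsGroupInv x g) : IsGroupInv (D.dag x) (D.dag g) := by
  obtain ⟨h₁, h₂, h₃⟩ := hg
  refine ⟨?_, ?_, ?_⟩
  · simpa only [D.dag_comp, Category.assoc] using congrArg D.dag h₁
  · simpa only [D.dag_comp, Category.assoc] using congrArg D.dag h₂
  · simpa only [D.dag_comp, Category.assoc] using (congrArg D.dag h₃).symm

theorem dag_eq_of_dag_eq (D : Dagger C) (hg : IsGroupInv x g) (hx : D.dag x = x) :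
    D.dag g = g :=
  (hx ▸ hg.dag D).unique hg

theorem comp_comp_eq_of_comp_eq {B : C} {y h : B ⟶ B} {f : A ⟶ B}
    (hg : IsGroupInv x g) (hh : IsGroupInv y h) (hf : f ≫ y = x ≫ f) :
    x ≫ g ≫ f = f ≫ y ≫ h :=
  calc x ≫ g ≫ f = g ≫ f ≫ y := by rw [reassoc_of% hg.2.2, hf]
    _ = g ≫ f ≫ y ≫ y ≫ h := by rw [hh.self_self_inv]
    _ = g ≫ x ≫ x ≫ f ≫ h := by rw [reassoc_of% hf, reassoc_of% hf]
    _ = f ≫ y ≫ h := by rw [reassoc_of% hg.inv_self_self, reassoc_of% hf]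

end IsGroupInv

namespace IsDagGroupInv

variable {D : Dagger C} {A B : C} {f : A ⟶ B} {p : B ⟶ A}

theorem dag (hp : IsDagGroupInv D f p) : IsDagGroupInv D (D.dag f) (D.dag p) := by
  obtain ⟨h₁, h₂, h₃, h₄, h₅⟩ := hp
  refine ⟨?_, ?_, ?_, ?_, ?_⟩
  · simpa only [D.dag_comp, D.dag_dag, Category.assoc] using congrArg D.dag h₂
  · simpa only [D.dag_comp, D.dag_dag, Category.assoc] using congrArg D.dag h₁
  · simpa only [D.dag_comp, Category.assoc] using congrArg D.dag h₃
  · rw [D.dag_comp, D.dag_dag, D.dag_dag, ← D.dag_comp, h₅]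
  · rw [D.dag_comp, D.dag_dag, D.dag_dag, ← D.dag_comp, h₄]

theorem isGroupInv_comp_dag (hp : IsDagGroupInv D f p) :
    IsGroupInv (f ≫ D.dag f) (D.dag p ≫ p) := by
  obtain ⟨h₁, -, h₃, h₄, h₅⟩ := hp
  have hpf : D.dag p ≫ D.dag f = f ≫ p := by rw [← D.dag_comp, h₄]
  have hfp : D.dag f ≫ D.dag p = p ≫ f := by rw [← D.dag_comp, h₅]
  have hff : f ≫ p ≫ f ≫ D.dag f = f ≫ D.dag f := by
    simpa only [D.dag_comp, D.dag_dag, Category.assoc, reassoc_of% hpf] using congrArg D.dag h₁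
  refine ⟨?_, ?_, ?_⟩ <;> simp only [Category.assoc]
  · rw [reassoc_of% hfp, reassoc_of% h₃, hff]
  · rw [reassoc_of% hfp, reassoc_of% h₃, h₃]
  · rw [reassoc_of% hfp, h₃, ← reassoc_of% hfp, reassoc_of% hpf, hpf, h₃]

end IsDagGroupInv

theorem isDagGroupInv_dag_comp {D : Dagger C} {A B : C} {f : A ⟶ B} {g : A ⟶ A} {h : B ⟶ B}
    (hg : IsGroupInv (f ≫ D.dag f) g) (hh : IsGroupInv (D.dag f ≫ f) h) :
    IsDagGroupInv D f (D.dag f ≫ g) := by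
  have hgg : D.dag g = g := hg.dag_eq_of_dag_eq D (D.dag_comp_dag f)
  have hfh : (f ≫ D.dag f) ≫ g ≫ f = f ≫ (D.dag f ≫ f) ≫ h :=
    hg.comp_comp_eq_of_comp_eq hh (Category.assoc _ _ _).symm
  simp only [Category.assoc] at hfh
  refine ⟨?_, ?_, ?_, ?_, ?_⟩
  · simpa only [Category.assoc] using hg.self_self_inv
  · simp only [Category.assoc]
    rw [← reassoc_of% hg.2.2, hfh]
    simpa only [Category.assoc] using hh.self_self_inv
  · simpa only [Category.assoc] using congrArg (D.dag f ≫ ·) hg.2.1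
  · simpa only [D.dag_comp, D.dag_dag, hgg, Category.assoc] using hg.2.2.symm
  · simp only [D.dag_comp, D.dag_dag, hgg, Category.assoc]

/-- `f` has a †-group inverse iff both `f ≫ f†` and `f† ≫ f` have group inverses. -/
theorem dagGroupInv_iff_groupInv {C : Type u} [Category.{v} C] (D : Dagger C)
    {A B : C} (f : A ⟶ B) :
    (∃ p : B ⟶ A, IsDagGroupInv D f p) ↔
    ((∃ g : A ⟶ A, IsGroupInv (f ≫ D.dag f) g) ∧
     (∃ h : B ⟶ B, IsGroupInv (D.dag f ≫ f) h)) := by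
  constructor
  · rintro ⟨p, hp⟩
    refine ⟨⟨_, hp.isGroupInv_comp_dag⟩, ⟨p ≫ D.dag p, ?_⟩⟩
    simpa only [D.dag_dag] using hp.dag.isGroupInv_comp_dag
  · rintro ⟨⟨g, hg⟩, ⟨h, hh⟩⟩
    exact ⟨_, isDagGroupInv_dag_comp hg hh⟩
end

section
/- Every matrix over a field has a transpose-†-Drazin inverse: for any field K and any matrix A : Matrix (Fin m) (Fin n) K, there exists a matrix B : Matrix (Fin n) (Fin m) K such that (1) there exists k ∈ ℕ with (A * Aᵀ)^k * A * B = (A * Aᵀ)^k and B * A * (Aᵀ * A)^k = (Aᵀ * A)^k, (2) B * A * B = B, (3) (A * B)ᵀ = A * B, and (4) (B * A)ᵀ = B * A. -/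
open Matrix Polynomial

private lemma aeval_transpose_self {K : Type*} [Field K] {m : ℕ}
    (S : Matrix (Fin m) (Fin m) K) (hS : Sᵀ = S) (p : K[X]) :
    (Polynomial.aeval S p)ᵀ = Polynomial.aeval S p := by
  induction p using Polynomial.induction_on' with
  | add p q hp hq => simp only [map_add, transpose_add, hp, hq]
  | monomial n a =>
      simp [Polynomial.aeval_monomial, Algebra.algebraMap_eq_smul_one,
        smul_mul_assoc, one_mul, transpose_smul, transpose_pow, hS]

/-- Every matrix over a field has a transpose-†-Drazin inverse. -/
theorem matrix_has_transpose_dagDrazinInv (K : Type*) [Field K] (m n : ℕ)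
    (A : Matrix (Fin m) (Fin n) K) :
    ∃ B : Matrix (Fin n) (Fin m) K,
      (∃ k : ℕ, (A * Aᵀ) ^ k * A * B = (A * Aᵀ) ^ k ∧
        B * A * (Aᵀ * A) ^ k = (Aᵀ * A) ^ k) ∧
      B * A * B = B ∧
      (A * B)ᵀ = A * B ∧
      (B * A)ᵀ = B * A := by
  classical
  set S : Matrix (Fin m) (Fin m) K := A * Aᵀ with hSdef
  set T : Matrix (Fin n) (Fin n) K := Aᵀ * A with hTdef
  have hS : Sᵀ = S := by rw [hSdef, transpose_mul, transpose_transpose]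
  -- factor the characteristic polynomial as X^r * q with q.coeff 0 ≠ 0
  have hp0 : S.charpoly ≠ 0 := (Matrix.charpoly_monic S).ne_zero
  obtain ⟨q, hq, hqnd⟩ := S.charpoly.exists_eq_pow_rootMultiplicity_mul_and_not_dvd hp0 0
  rw [map_zero, sub_zero] at hq hqnd
  set r : ℕ := S.charpoly.rootMultiplicity 0 with hr
  set c : K := q.coeff 0 with hcdef
  have hc : c ≠ 0 := fun h => hqnd (Polynomial.X_dvd_iff.2 h)
  have hCH : Polynomial.aeval S S.charpoly = 0 := Matrix.aeval_self_charpoly S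
  set H : Matrix (Fin m) (Fin m) K := Polynomial.aeval S q.divX with hHdef
  have hq' : Polynomial.X * q.divX + Polynomial.C c = q := Polynomial.X_mul_divX_add q
  have h0 : S ^ r * Polynomial.aeval S q = 0 := by
    have h0' : Polynomial.aeval S (Polynomial.X ^ r * q) = 0 := by rw [← hq]; exact hCH
    rw [_root_.map_mul, map_pow, Polynomial.aeval_X] at h0'
    exact h0'
  have hq2 : Polynomial.aeval S q = S * H + c • 1 := by
    rw [← hq', _root_.map_add, _root_.map_mul, Polynomial.aeval_X, Polynomial.aeval_C,
      Algebra.algebraMap_eq_smul_one, hHdef]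
  have hkey0 : S ^ (r + 1) * H + c • S ^ r = 0 := by
    have h2 : S ^ r * (S * H + c • 1) = 0 := by rw [← hq2]; exact h0
    rw [mul_add, ← mul_assoc, ← pow_succ, mul_smul_comm, mul_one] at h2
    exact h2
  set X₀ : Matrix (Fin m) (Fin m) K := (-c⁻¹) • H with hX₀def
  have hX₀poly : X₀ = Polynomial.aeval S ((-c⁻¹) • q.divX) := by
    rw [hX₀def, hHdef]
    exact (_root_.map_smul (Polynomial.aeval S) _ _).symm
  have hcomm : Commute S X₀ := by
    rw [hX₀poly]
    simpa using
      ((Commute.all (Polynomial.X : K[X]) ((-c⁻¹ : K) • q.divX)).map (Polynomial.aeval S))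
  have hX₀T : X₀ᵀ = X₀ := by rw [hX₀poly]; exact aeval_transpose_self S hS _
  have hkey : S ^ (r + 1) * X₀ = S ^ r := by
    have h1 : S ^ (r + 1) * H = -(c • S ^ r) := eq_neg_of_add_eq_zero_left hkey0
    rw [hX₀def, mul_smul_comm, h1, smul_neg, smul_smul, neg_mul, neg_smul, neg_neg,
      inv_mul_cancel₀ hc, one_smul]
  have hcp : ∀ a b : ℕ, S ^ a * X₀ ^ b = X₀ ^ b * S ^ a := fun a b => (hcomm.pow_pow a b).eq
  -- key power identity
  have hj' : ∀ j : ℕ, X₀ ^ j * S ^ (r + j) = S ^ r := by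
    intro j
    induction j with
    | zero => simp
    | succ j ih =>
        have e : r + (j + 1) = (r + j) + 1 := rfl
        rw [e, pow_succ' X₀, pow_succ S, mul_assoc, ← mul_assoc (X₀ ^ j), ih,
          ← pow_succ S, ← (hcomm.pow_left (r + 1)).eq, hkey]
  have hred : ∀ a t : ℕ, X₀ ^ a * S ^ (r + a + t) = S ^ (r + t) := by
    intro a t
    rw [pow_add S (r + a) t, ← mul_assoc, hj' a, ← pow_add]
  -- the candidate
  set X : Matrix (Fin m) (Fin m) K := X₀ ^ (r + 1) * S ^ r with hXdef
  have hXT : Xᵀ = X := by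
    rw [hXdef, transpose_mul, transpose_pow, transpose_pow, hS, hX₀T, hcp]
  have hSX : Commute S X := (hcomm.pow_right (r + 1)).mul_right ((Commute.refl S).pow_right r)
  have h1 : S ^ (2 * r + 1 + 1) * X = S ^ (2 * r + 1) := by
    rw [hXdef, ← mul_assoc, hcp, mul_assoc, ← pow_add,
      show 2 * r + 1 + 1 + r = r + (r + 1) + (r + 1) by ring, hred,
      show r + (r + 1) = 2 * r + 1 by ring]
  have hXS : X * S ^ (2 * r + 1) = S ^ (2 * r) := by
    rw [hXdef, mul_assoc, ← pow_add, show r + (2 * r + 1) = r + (r + 1) + r by ring, hred,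
      show r + r = 2 * r by ring]
  have hXSX : X * S * X = X := by
    rw [hXdef, mul_assoc (X₀ ^ (r + 1)) (S ^ r) S, ← pow_succ, mul_assoc,
      ← mul_assoc (S ^ (r + 1)), hcp (r + 1) (r + 1),
      mul_assoc (X₀ ^ (r + 1)) (S ^ (r + 1)) (S ^ r), ← pow_add,
      show r + 1 + r = r + (r + 1) + 0 by ring, hred]
    rfl
  -- A * T^j = S^j * A and T^(j+1) = Aᵀ * S^j * A
  have hAT : ∀ j : ℕ, A * T ^ j = S ^ j * A := by
    intro j
    induction j with
    | zero => simp
    | succ j ih =>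
        rw [pow_succ, ← Matrix.mul_assoc, ih, Matrix.mul_assoc, hTdef,
          ← Matrix.mul_assoc A Aᵀ A, ← hSdef, ← Matrix.mul_assoc, ← pow_succ]
  have hT : ∀ j : ℕ, T ^ (j + 1) = Aᵀ * S ^ j * A := by
    intro j
    rw [pow_succ', hTdef, Matrix.mul_assoc, hAT j, ← Matrix.mul_assoc]
  refine ⟨Aᵀ * X, ⟨2 * r + 1, ?_, ?_⟩, ?_, ?_, ?_⟩
  · rw [Matrix.mul_assoc, ← Matrix.mul_assoc A Aᵀ X, ← hSdef, ← mul_assoc, ← pow_succ, h1]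
  · rw [Matrix.mul_assoc (Aᵀ * X) A (T ^ (2 * r + 1)), hAT,
      ← Matrix.mul_assoc (Aᵀ * X) (S ^ (2 * r + 1)) A, Matrix.mul_assoc Aᵀ X (S ^ (2 * r + 1)),
      hXS, ← hT (2 * r)]
  · rw [Matrix.mul_assoc (Aᵀ * X) A (Aᵀ * X), ← Matrix.mul_assoc A Aᵀ X, ← hSdef,
      Matrix.mul_assoc Aᵀ X (S * X), ← mul_assoc X S X, hXSX]
  · rw [← Matrix.mul_assoc, ← hSdef, transpose_mul, hXT, hS]
    exact hSX.symm.eq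
  · rw [transpose_mul, transpose_mul, transpose_transpose, hXT, ← Matrix.mul_assoc]
end
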